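/- arXiv:2512.17448 — 5 statements merged into one kernel-verified Lean document; each statement's English description precedes it below -/
import Mathlib

section
/- Fix γ > 0 and 1 ≤ p ≤ ∞. The map ι : Λ → E defined by ι(a)(x) := Σ_{n=0}^∞ (a_n/n!) x^n for x ∈ [0,γ] is a bijection, is a homeomorphism from (Λ, d_Λ) onto (E, ρ_p), and satisfies ι ∘ σ = (d/dx) ∘ ι. Consequently the shift dynamical system (Λ, σ) and the system (E, d/dx) are topologically conjugate. -/
open MeasureTheory Set Filter
open scoped ENNReal Topology

/-- The `L^p` distance of two functions over the interval `[a, b]`. -/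
noncomputable def rho (a b : ℝ) (p : ℝ≥0∞) (f g : ℝ → ℝ) : ℝ :=
  (eLpNorm (fun x => f x - g x) p (volume.restrict (Icc a b))).toReal

/-- A sequence taking values in `{0, 1}`. -/
def IsBinary (a : ℕ → ℝ) : Prop := ∀ n, a n = 0 ∨ a n = 1

/-- The function `x ↦ Σ aₙ/n! xⁿ` attached to a coefficient sequence. -/
noncomputable def fseq (a : ℕ → ℝ) : ℝ → ℝ :=
  fun x => ∑' n : ℕ, a n / (Nat.factorial n : ℝ) * x ^ n

/-- The set `E` of smooth functions of the form `Σ aₙ/n! xⁿ` with binary coefficients. -/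
def Esp : Set (ℝ → ℝ) :=
  {f | ContDiff ℝ (⊤ : ℕ∞) f ∧ ∃ a : ℕ → ℝ, IsBinary a ∧
    ∀ x : ℝ, HasSum (fun n : ℕ => a n / (Nat.factorial n : ℝ) * x ^ n) (f x)}

/-- The shift space `Λ = {0,1}^ℕ`. -/
abbrev Lam : Type := {a : ℕ → ℝ // IsBinary a}

/-- The metric `d_Λ(x, y) = Σ |xᵢ - yᵢ| / 2ⁱ` on the shift space. -/
noncomputable def dLam (x y : Lam) : ℝ := ∑' i : ℕ, |x.1 i - y.1 i| / 2 ^ i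

/-- The shift map `σ`. -/
def shiftL (x : Lam) : Lam := ⟨fun n => x.1 (n + 1), fun n => x.2 (n + 1)⟩

/-- The map `ι : Λ → C^∞`, `ι(a)(x) = Σ aₙ/n! xⁿ`. -/
noncomputable def iotaL (x : Lam) : ℝ → ℝ := fseq x.1

/-!
The coefficients of `ι a` are its derivatives at `0`, which gives injectivity, and term-by-term
differentiation shifts them, which gives `ι ∘ σ = d/dx ∘ ι`.

Closeness in `d_Λ` means agreement on a long initial segment. If `a` and `b` agree below `k`,
then `|ι a - ι b| ≤ Σ_{n ≥ k} γⁿ / n!` on `[0, γ]`, a tail of the exponential series. Conversely,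
if they first differ at `i ≤ N`, then for `0 < t ≤ 1/3` the term `tⁱ / i!` dominates the rest of
the series, so `|ι a - ι b| ≥ (c/2)ᴺ / (2 N!)` on `[c/2, c]` with `c = min γ (1/3)`; this bounds
the `Lᵖ` distance from below uniformly in `a, b`.
-/

open scoped Nat

section FactorialSeries

variable {a b : ℕ → ℝ} {C : ℝ}

lemma abs_div_factorial_mul_pow_le (ha : ∀ n, |a n| ≤ C) (x : ℝ) (n : ℕ) :
    |a n / n ! * x ^ n| ≤ C * (|x| ^ n / n !) := by
  rw [abs_mul, abs_div, Nat.abs_cast, abs_pow, div_mul_eq_mul_div, mul_div_assoc]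
  gcongr
  exact ha n

lemma summable_fseq (ha : ∀ n, |a n| ≤ C) (x : ℝ) :
    Summable fun n => a n / n ! * x ^ n :=
  .of_norm_bounded ((Real.summable_pow_div_factorial |x|).mul_left C)
    (abs_div_factorial_mul_pow_le ha x)

lemma hasSum_fseq (ha : ∀ n, |a n| ≤ C) (x : ℝ) :
    HasSum (fun n => a n / n ! * x ^ n) (fseq a x) :=
  (summable_fseq ha x).hasSum

lemma fseq_sub {C' : ℝ} (ha : ∀ n, |a n| ≤ C) (hb : ∀ n, |b n| ≤ C') :
    fseq (a - b) = fseq a - fseq b := by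
  funext x
  simp only [fseq, Pi.sub_apply, sub_div, sub_mul]
  exact (summable_fseq ha x).tsum_sub (summable_fseq hb x)

lemma fseq_zero (a : ℕ → ℝ) : fseq a 0 = a 0 := by
  rw [fseq, tsum_eq_single 0 fun n hn => by simp [zero_pow hn]]
  simp

lemma natCast_succ_mul_pow_div_factorial_succ (n : ℕ) (y : ℝ) :
    ((n + 1 : ℕ) : ℝ) * y ^ (n + 1 - 1) / (n + 1)! = y ^ n / n ! := by
  rw [Nat.factorial_succ, Nat.add_sub_cancel, Nat.cast_mul]
  field_simp

lemma hasDerivAt_fseq (ha : ∀ n, |a n| ≤ C) (x : ℝ) :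
    HasDerivAt (fseq a) (fseq (fun n => a (n + 1)) x) x := by
  set R := |x| + 1
  have hx : x ∈ Metric.ball (0 : ℝ) R := by simp [R]
  have hC : 0 ≤ C := (abs_nonneg _).trans (ha 0)
  have hterm : ∀ n y, HasDerivAt (fun z => a n / n ! * z ^ n) (a n / n ! * (n * y ^ (n - 1))) y :=
    fun n y => (hasDerivAt_pow n y).const_mul _
  have hbound : ∀ n, ∀ y ∈ Metric.ball (0 : ℝ) R,
      ‖a n / n ! * (n * y ^ (n - 1))‖ ≤ C * (n * R ^ (n - 1) / n !) := by
    intro n y hy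
    rw [mem_ball_zero_iff, Real.norm_eq_abs] at hy
    calc ‖a n / n ! * (n * y ^ (n - 1))‖ = |a n| * (n * |y| ^ (n - 1) / n !) := by
          rw [Real.norm_eq_abs, abs_mul, abs_mul, abs_div, Nat.abs_cast, Nat.abs_cast, abs_pow]
          ring
      _ ≤ C * (n * R ^ (n - 1) / n !) := by
          apply mul_le_mul (ha n) _ (by positivity) hC
          gcongr
  have hsummable : Summable fun n => C * (n * R ^ (n - 1) / n !) := by
    refine (summable_nat_add_iff 1).mp (((Real.summable_pow_div_factorial R).mul_left C).congr
      fun n => ?_)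
    rw [natCast_succ_mul_pow_div_factorial_succ]
  have hderiv := hasDerivAt_tsum_of_isPreconnected hsummable Metric.isOpen_ball
    (convex_ball (0 : ℝ) R).isPreconnected (fun n y _ => hterm n y) hbound
    (Metric.mem_ball_self (by positivity)) (summable_fseq ha 0) hx
  have hs : Summable fun n => a n / n ! * (n * x ^ (n - 1)) :=
    .of_norm_bounded hsummable fun n => hbound n x hx
  have hsum : fseq (fun n => a (n + 1)) x = ∑' n, a n / n ! * (n * x ^ (n - 1)) := by
    rw [hs.tsum_eq_zero_add, fseq]
    simp only [Nat.cast_zero, zero_mul, mul_zero, zero_add]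
    refine tsum_congr fun n => ?_
    calc a (n + 1) / n ! * x ^ n = a (n + 1) * (x ^ n / n !) := by ring
      _ = _ := by rw [← natCast_succ_mul_pow_div_factorial_succ]; ring
  rw [hsum]
  exact hderiv

lemma deriv_fseq (ha : ∀ n, |a n| ≤ C) : deriv (fseq a) = fseq fun n => a (n + 1) :=
  funext fun x => (hasDerivAt_fseq ha x).deriv

lemma iteratedDeriv_fseq (ha : ∀ n, |a n| ≤ C) (k : ℕ) :
    iteratedDeriv k (fseq a) = fseq fun n => a (n + k) := by
  induction k generalizing a with
  | zero => simp
  | succ k ih =>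
    rw [iteratedDeriv_succ', deriv_fseq ha, ih fun n => ha (n + 1)]
    simp only [add_assoc]

lemma contDiff_fseq (ha : ∀ n, |a n| ≤ C) : ContDiff ℝ (⊤ : ℕ∞) (fseq a) := by
  refine contDiff_of_differentiable_iteratedDeriv fun k _ => ?_
  rw [iteratedDeriv_fseq ha]
  exact fun x => (hasDerivAt_fseq (fun n => ha (n + k)) x).differentiableAt

lemma eq_of_fseq_eq {C' : ℝ} (ha : ∀ n, |a n| ≤ C) (hb : ∀ n, |b n| ≤ C')
    (h : fseq a = fseq b) : a = b := by
  funext n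
  have hn := congrArg (fun f => iteratedDeriv n f 0) h
  simpa [iteratedDeriv_fseq ha, iteratedDeriv_fseq hb, fseq_zero] using hn

end FactorialSeries

section VanishingLowOrder

variable {d : ℕ → ℝ} {k : ℕ}

lemma hasSum_fseq_nat_add {C : ℝ} (hd : ∀ n, |d n| ≤ C) (hk : ∀ n < k, d n = 0) (x : ℝ) :
    HasSum (fun n => d (n + k) / (n + k)! * x ^ (n + k)) (fseq d x) := by
  have hhead : ∑ i ∈ Finset.range k, d i / i ! * x ^ i = 0 :=
    Finset.sum_eq_zero fun i hi => by simp [hk i (Finset.mem_range.mp hi)]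
  simpa [hhead] using (hasSum_nat_add_iff' k).mpr (hasSum_fseq hd x)

lemma abs_fseq_le_of_eq_zero (hd : ∀ n, |d n| ≤ 1) (hk : ∀ n < k, d n = 0) {r t : ℝ}
    (ht : |t| ≤ r) : |fseq d t| ≤ ∑' n, r ^ (n + k) / (n + k)! := by
  have hr : Summable fun n => r ^ (n + k) / (n + k)! :=
    (summable_nat_add_iff k).mpr (Real.summable_pow_div_factorial r)
  refine (hasSum_fseq_nat_add hd hk t).norm_le_of_bounded hr.hasSum fun n => ?_
  refine (abs_div_factorial_mul_pow_le hd t (n + k)).trans ?_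
  rw [one_mul]
  gcongr

lemma pow_div_two_mul_factorial_le_abs_fseq (hd : ∀ n, |d n| ≤ 1) (hk : ∀ n < k, d n = 0)
    (hdk : |d k| = 1) {t : ℝ} (ht0 : 0 < t) (ht : t ≤ 1 / 3) :
    t ^ k / (2 * k !) ≤ |fseq d t| := by
  have hrest : HasSum (fun n => d (n + 1 + k) / (n + 1 + k)! * t ^ (n + 1 + k))
      (fseq d t - d k / k ! * t ^ k) := by
    simpa using (hasSum_nat_add_iff' 1).mpr (hasSum_fseq_nat_add hd hk t)
  have hgeom : HasSum (fun n => t ^ k / k ! * (t * t ^ n)) (t ^ k / k ! * (t * (1 - t)⁻¹)) :=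
    ((hasSum_geometric_of_lt_one ht0.le (by linarith)).mul_left t).mul_left _
  have hrest_le : |fseq d t - d k / k ! * t ^ k| ≤ t ^ k / k ! * (t * (1 - t)⁻¹) := by
    refine hrest.norm_le_of_bounded hgeom fun n => ?_
    refine (abs_div_factorial_mul_pow_le hd t (n + 1 + k)).trans ?_
    calc 1 * (|t| ^ (n + 1 + k) / (n + 1 + k)!) ≤ t ^ (n + 1 + k) / k ! := by
          rw [one_mul, abs_of_pos ht0]
          gcongr
          exact Nat.le_add_left k (n + 1)
      _ = t ^ k / k ! * (t * t ^ n) := by ring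
  have hratio : t * (1 - t)⁻¹ ≤ 1 / 2 := by
    rw [← div_eq_mul_inv, div_le_iff₀ (by linarith)]
    linarith
  have hlead : |d k / k ! * t ^ k| = t ^ k / k ! := by
    rw [abs_mul, abs_div, hdk, Nat.abs_cast, abs_pow, abs_of_pos ht0]
    ring
  calc t ^ k / (2 * k !) = (t ^ k / k !) - t ^ k / k ! * (1 / 2) := by ring
    _ ≤ (t ^ k / k !) - t ^ k / k ! * (t * (1 - t)⁻¹) := by gcongr
    _ ≤ |fseq d t| := by
        have := abs_sub_abs_le_abs_sub (d k / k ! * t ^ k) (d k / k ! * t ^ k - fseq d t)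
        rw [sub_sub_cancel, abs_sub_comm] at this
        linarith

end VanishingLowOrder

section Binary

variable {a b : ℕ → ℝ}

lemma IsBinary.abs_le_one (ha : IsBinary a) (n : ℕ) : |a n| ≤ 1 := by
  rcases ha n with h | h <;> simp [h]

lemma IsBinary.abs_sub_le_one (ha : IsBinary a) (hb : IsBinary b) (n : ℕ) :
    |(a - b) n| ≤ 1 := by
  rcases ha n with h | h <;> rcases hb n with h' | h' <;> simp [h, h']

lemma IsBinary.abs_sub_eq_one (ha : IsBinary a) (hb : IsBinary b) {n : ℕ} (h : a n ≠ b n) :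
    |(a - b) n| = 1 := by
  rcases ha n with h₁ | h₁ <;> rcases hb n with h₂ | h₂ <;> simp_all

end Binary

section ShiftSpace

variable {x y : Lam} {N : ℕ}

lemma summable_dLam (x y : Lam) : Summable fun i => |x.1 i - y.1 i| / 2 ^ i :=
  summable_geometric_two.of_nonneg_of_le (fun i => by positivity) fun i => by
    rw [one_div_pow]
    gcongr
    exact x.2.abs_sub_le_one y.2 i

lemma eq_of_dLam_lt (h : dLam x y < (1 / 2) ^ N) : ∀ i ≤ N, x.1 i = y.1 i := by
  intro i hi
  by_contra hne
  have hterm : (1 / 2 : ℝ) ^ i ≤ dLam x y :=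
    calc (1 / 2 : ℝ) ^ i = |x.1 i - y.1 i| / 2 ^ i := by
          rw [← Pi.sub_apply, x.2.abs_sub_eq_one y.2 hne, one_div_pow]
      _ ≤ dLam x y := (summable_dLam x y).le_tsum i fun j _ => by positivity
  have hpow : (1 / 2 : ℝ) ^ N ≤ (1 / 2) ^ i := pow_le_pow_of_le_one (by norm_num) (by norm_num) hi
  linarith

lemma dLam_le_of_eq (h : ∀ i ≤ N, x.1 i = y.1 i) : dLam x y ≤ (1 / 2) ^ N := by
  have hhead : ∑ i ∈ Finset.range (N + 1), |x.1 i - y.1 i| / 2 ^ i = 0 :=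
    Finset.sum_eq_zero fun i hi => by
      simp [h i (Nat.lt_succ_iff.mp (Finset.mem_range.mp hi))]
  have htail := (hasSum_nat_add_iff' (N + 1)).mpr (summable_dLam x y).hasSum
  rw [hhead, sub_zero] at htail
  have hgeom : HasSum (fun i => (1 / 2 : ℝ) ^ (i + (N + 1))) ((1 / 2) ^ N) := by
    have h := hasSum_geometric_two.mul_left ((1 / 2 : ℝ) ^ (N + 1))
    rw [show (1 / 2 : ℝ) ^ (N + 1) * 2 = (1 / 2) ^ N by ring] at h
    simpa only [← pow_add, add_comm] using h
  refine hasSum_le (fun i => ?_) htail hgeom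
  rw [one_div_pow]
  gcongr
  exact x.2.abs_sub_le_one y.2 _

end ShiftSpace

section LpBounds

lemma eLpNorm_restrict_Icc_le_of_abs_le {f : ℝ → ℝ} {a b C : ℝ} (p : ℝ≥0∞)
    (hf : ∀ t ∈ Icc a b, |f t| ≤ C) :
    eLpNorm f p (volume.restrict (Icc a b))
      ≤ ENNReal.ofReal (b - a) ^ p.toReal⁻¹ * ENNReal.ofReal C := by
  have h := eLpNorm_le_of_ae_bound (μ := volume.restrict (Icc a b)) (p := p)
    ((ae_restrict_iff' measurableSet_Icc).mpr
      (ae_of_all _ fun t ht => (Real.norm_eq_abs _).trans_le (hf t ht)))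
  rwa [Measure.restrict_apply_univ, Real.volume_Icc] at h

lemma eLpNorm_const_le_of_norm_le {α E F : Type*} [MeasurableSpace α] [NormedAddCommGroup E]
    [NormedAddCommGroup F] {μ : Measure α} {p : ℝ≥0∞} {s t : Set α} {c : E} {f : α → F}
    (hst : s ⊆ t) (hs : MeasurableSet s) (hf : ∀ x ∈ s, ‖c‖ ≤ ‖f x‖) :
    eLpNorm (fun _ => c) p (μ.restrict s) ≤ eLpNorm f p (μ.restrict t) :=
  (eLpNorm_mono_ae ((ae_restrict_iff' hs).mpr (ae_of_all _ hf))).trans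
    (eLpNorm_mono_measure _ (Measure.restrict_mono hst le_rfl))

lemma toReal_eLpNorm_const_restrict_Icc_pos {a b c : ℝ} {p : ℝ≥0∞} (hp : p ≠ 0) (hab : a < b)
    (hc : c ≠ 0) : 0 < (eLpNorm (fun _ : ℝ => c) p (volume.restrict (Icc a b))).toReal := by
  have hvol : volume.restrict (Icc a b) univ = ENNReal.ofReal (b - a) := by
    rw [Measure.restrict_apply_univ, Real.volume_Icc]
  have hμ : volume.restrict (Icc a b) ≠ 0 := by
    rw [Ne, ← Measure.measure_univ_eq_zero, hvol, ENNReal.ofReal_eq_zero, not_le, sub_pos]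
    exact hab
  rw [eLpNorm_const c hp hμ, hvol]
  refine ENNReal.toReal_pos (mul_ne_zero (by simpa using hc) ?_) (by finiteness)
  exact (ENNReal.rpow_pos (ENNReal.ofReal_pos.mpr (sub_pos.mpr hab)) (by finiteness)).ne'

end LpBounds

section Conjugacy

variable {γ : ℝ} {p : ℝ≥0∞} {x y : Lam} {k : ℕ}

lemma iotaL_injective : Function.Injective iotaL :=
  fun x y h => Subtype.ext (eq_of_fseq_eq x.2.abs_le_one y.2.abs_le_one h)

lemma range_iotaL : range iotaL = Esp := by
  ext f
  constructor
  · rintro ⟨x, rfl⟩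
    exact ⟨contDiff_fseq x.2.abs_le_one, x.1, x.2, hasSum_fseq x.2.abs_le_one⟩
  · rintro ⟨-, a, ha, hsum⟩
    exact ⟨⟨a, ha⟩, funext fun t => (hsum t).tsum_eq⟩

lemma deriv_iotaL (x : Lam) : deriv (iotaL x) = iotaL (shiftL x) :=
  deriv_fseq x.2.abs_le_one

lemma iotaL_sub (x y : Lam) : iotaL x - iotaL y = fseq (x.1 - y.1) :=
  (fseq_sub x.2.abs_le_one y.2.abs_le_one).symm

lemma eLpNorm_iotaL_sub_le (γ : ℝ) (p : ℝ≥0∞) (h : ∀ i < k, x.1 i = y.1 i) :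
    eLpNorm (fun t => iotaL x t - iotaL y t) p (volume.restrict (Icc 0 γ))
      ≤ ENNReal.ofReal γ ^ p.toReal⁻¹ * ENNReal.ofReal (∑' n, γ ^ (n + k) / (n + k)!) := by
  refine (eLpNorm_restrict_Icc_le_of_abs_le p fun t ht => ?_).trans_eq (by rw [sub_zero])
  rw [← Pi.sub_apply, iotaL_sub]
  exact abs_fseq_le_of_eq_zero (x.2.abs_sub_le_one y.2) (fun i hi => sub_eq_zero.mpr (h i hi))
    (abs_le.mpr ⟨by linarith [ht.1, ht.2], ht.2⟩)

lemma eLpNorm_iotaL_sub_ne_top (γ : ℝ) (p : ℝ≥0∞) (x y : Lam) :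
    eLpNorm (fun t => iotaL x t - iotaL y t) p (volume.restrict (Icc 0 γ)) ≠ ⊤ :=
  ne_top_of_le_ne_top (by finiteness) (eLpNorm_iotaL_sub_le γ p (k := 0) (by simp))

lemma rho_iotaL_le (hγ : 0 ≤ γ) (p : ℝ≥0∞) (h : ∀ i < k, x.1 i = y.1 i) :
    rho 0 γ p (iotaL x) (iotaL y)
      ≤ (ENNReal.ofReal γ ^ p.toReal⁻¹).toReal * ∑' n, γ ^ (n + k) / (n + k)! := by
  have htail : 0 ≤ ∑' n, γ ^ (n + k) / (n + k)! := tsum_nonneg fun n => by positivity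
  calc rho 0 γ p (iotaL x) (iotaL y)
      ≤ (ENNReal.ofReal γ ^ p.toReal⁻¹ * ENNReal.ofReal (∑' n, γ ^ (n + k) / (n + k)!)).toReal :=
        ENNReal.toReal_mono (by finiteness) (eLpNorm_iotaL_sub_le γ p h)
    _ = _ := by rw [ENNReal.toReal_mul, ENNReal.toReal_ofReal htail]

lemma exists_rho_lt_of_dLam_lt (hγ : 0 ≤ γ) (p : ℝ≥0∞) {ε : ℝ} (hε : 0 < ε) :
    ∃ δ > 0, ∀ x y : Lam, dLam x y < δ → rho 0 γ p (iotaL x) (iotaL y) < ε := by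
  set K := (ENNReal.ofReal γ ^ p.toReal⁻¹).toReal
  have htail : Tendsto (fun k => K * ∑' n, γ ^ (n + k) / (n + k)!) atTop (𝓝 0) := by
    simpa using (tendsto_sum_nat_add fun n => γ ^ n / n !).const_mul K
  obtain ⟨k, hk⟩ := (htail.eventually_lt_const hε).exists
  exact ⟨(1 / 2) ^ k, by positivity, fun x y hxy =>
    (rho_iotaL_le hγ p fun i hi => eq_of_dLam_lt hxy i hi.le).trans_lt hk⟩

lemma pow_div_two_mul_factorial_le_abs_iotaL_sub {i : ℕ} (h : ∀ j < i, x.1 j = y.1 j)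
    (hne : x.1 i ≠ y.1 i) {t : ℝ} (ht0 : 0 < t) (ht : t ≤ 1 / 3) :
    t ^ i / (2 * i !) ≤ |iotaL x t - iotaL y t| := by
  rw [← Pi.sub_apply, iotaL_sub]
  exact pow_div_two_mul_factorial_le_abs_fseq (x.2.abs_sub_le_one y.2)
    (fun j hj => sub_eq_zero.mpr (h j hj)) (x.2.abs_sub_eq_one y.2 hne) ht0 ht

lemma exists_rho_lt_imp_eq_of_le (hγ : 0 < γ) (hp : 1 ≤ p) (N : ℕ) :
    ∃ δ > 0, ∀ x y : Lam, rho 0 γ p (iotaL x) (iotaL y) < δ → ∀ i ≤ N, x.1 i = y.1 i := by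
  set c := min γ (1 / 3)
  have hc0 : 0 < c := lt_min hγ (by norm_num)
  have hc3 : c ≤ 1 / 3 := min_le_right _ _
  set m : ℝ := (c / 2) ^ N / (2 * N !)
  have hδ := toReal_eLpNorm_const_restrict_Icc_pos (zero_lt_one.trans_le hp).ne'
    (by linarith : c / 2 < c) (by positivity : m ≠ 0)
  refine ⟨_, hδ, fun x y hxy i => ?_⟩
  induction i using Nat.strong_induction_on with
  | _ i ih =>
  intro hiN
  by_contra hne
  have hlow : ∀ t ∈ Icc (c / 2) c, ‖m‖ ≤ ‖iotaL x t - iotaL y t‖ := by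
    intro t ht
    have ht0 : 0 < t := by linarith [ht.1]
    have hm : m ≤ t ^ i / (2 * i !) := by
      have hpow : (c / 2) ^ N ≤ t ^ i :=
        (pow_le_pow_of_le_one (by positivity) (by linarith) hiN).trans
          (pow_le_pow_left₀ (by positivity) ht.1 i)
      have hfac : (i ! : ℝ) ≤ N ! := by exact_mod_cast Nat.factorial_le hiN
      calc m = (c / 2) ^ N / (2 * N !) := rfl
        _ ≤ t ^ i / (2 * N !) := by gcongr
        _ ≤ t ^ i / (2 * i !) := by gcongr
    rw [Real.norm_eq_abs, Real.norm_eq_abs, abs_of_pos (by positivity)]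
    exact hm.trans (pow_div_two_mul_factorial_le_abs_iotaL_sub
      (fun j hj => ih j hj (hj.le.trans hiN)) hne ht0 (ht.2.trans hc3))
  have hle : (eLpNorm (fun _ : ℝ => m) p (volume.restrict (Icc (c / 2) c))).toReal
      ≤ rho 0 γ p (iotaL x) (iotaL y) :=
    ENNReal.toReal_mono (eLpNorm_iotaL_sub_ne_top γ p x y)
      (eLpNorm_const_le_of_norm_le (Icc_subset_Icc (by linarith) (min_le_left _ _))
        measurableSet_Icc hlow)
  linarith

lemma exists_dLam_lt_of_rho_lt (hγ : 0 < γ) (hp : 1 ≤ p) {ε : ℝ} (hε : 0 < ε) :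
    ∃ δ > 0, ∀ x y : Lam, rho 0 γ p (iotaL x) (iotaL y) < δ → dLam x y < ε := by
  obtain ⟨N, hN⟩ := exists_pow_lt_of_lt_one hε (by norm_num : (1 / 2 : ℝ) < 1)
  obtain ⟨δ, hδ, hagree⟩ := exists_rho_lt_imp_eq_of_le hγ hp N
  exact ⟨δ, hδ, fun x y hxy => (dLam_le_of_eq (hagree x y hxy)).trans_lt hN⟩

end Conjugacy

/-- For `γ > 0` and `1 ≤ p ≤ ∞`, the map `ι` is a bijection from `Λ`
onto `E`, it is a homeomorphism from `(Λ, d_Λ)` onto `(E, ρ_p)` (expressed by the ε-δ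
continuity of `ι` and of its inverse), and it intertwines the shift `σ` with the
differential operator `d/dx`; hence `(Λ, σ)` and `(E, d/dx)` are topologically conjugate. -/
theorem stmt0 (γ : ℝ) (hγ : 0 < γ) (p : ℝ≥0∞) (hp : 1 ≤ p) :
    Function.Injective iotaL ∧ Set.range iotaL = Esp ∧
    (∀ x : Lam, ∀ ε > (0 : ℝ), ∃ δ > (0 : ℝ), ∀ y : Lam,
      dLam x y < δ → rho 0 γ p (iotaL x) (iotaL y) < ε) ∧
    (∀ x : Lam, ∀ ε > (0 : ℝ), ∃ δ > (0 : ℝ), ∀ y : Lam,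
      rho 0 γ p (iotaL x) (iotaL y) < δ → dLam x y < ε) ∧
    (∀ x : Lam, iotaL (shiftL x) = deriv (iotaL x)) := by
  refine ⟨iotaL_injective, range_iotaL, fun x ε hε => ?_, fun x ε hε => ?_,
    fun x => (deriv_iotaL x).symm⟩
  · obtain ⟨δ, hδ, h⟩ := exists_rho_lt_of_dLam_lt hγ.le p hε
    exact ⟨δ, hδ, h x⟩
  · obtain ⟨δ, hδ, h⟩ := exists_dLam_lt_of_rho_lt hγ hp hε
    exact ⟨δ, hδ, h x⟩
end

section
/- Fix γ > 0 and 1 ≤ p ≤ ∞. The metric space (E, ρ_p) is a Cantor set: it is nonempty, compact, metrizable, totally disconnected, and has no isolated points. -/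
open MeasureTheory Set Filter
open scoped ENNReal Topology

/-- The topology on `E` induced by the metric `ρ_p`: it is generated by the open
`ρ_p`-balls of `E`. -/
noncomputable def Etop (γ : ℝ) (p : ℝ≥0∞) : TopologicalSpace ↥Esp :=
  TopologicalSpace.generateFrom
    {U : Set ↥Esp | ∃ f : ↥Esp, ∃ ε : ℝ, 0 < ε ∧ U = {g : ↥Esp | rho 0 γ p f.1 g.1 < ε}}

/-! For `σ ∈ {0,1}^ℕ` the entire function `f_σ(x) = Σ σₙ xⁿ / n!` lies in `E`, and by the
identity theorem for power series `σ ↦ f_σ` is a bijection from Cantor space onto `E`.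
If `σ` and `τ` agree below `N`, then `|f_σ - f_τ| ≤ Σ_{n ≥ N} γⁿ / n!` on `[0, γ]`, so the
bijection is continuous for `ρ_p`. Distinct elements of `E` are analytic, hence differ on an
open subset of `[0, γ]`, so `ρ_p` separates points and the topology is Hausdorff. A continuous
bijection from a compact space onto a Hausdorff space is a homeomorphism, and `E` inherits all
the Cantor-set properties of `{0,1}^ℕ`. -/

section Rho

variable {a b : ℝ} {p : ℝ≥0∞} {f g h : ℝ → ℝ}

theorem eLpNorm_restrict_Icc_ne_top (hf : Continuous f) :
    eLpNorm f p (volume.restrict (Icc a b)) ≠ ∞ := by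
  obtain ⟨C, hC⟩ := isCompact_Icc.exists_bound_of_continuousOn hf.continuousOn
  exact (MemLp.of_bound hf.aestronglyMeasurable C
    (ae_restrict_of_forall_mem measurableSet_Icc hC)).eLpNorm_ne_top

theorem rho_self (f : ℝ → ℝ) : rho a b p f f = 0 := by
  simp [rho]

theorem rho_comm (f g : ℝ → ℝ) : rho a b p f g = rho a b p g f := by
  rw [rho, rho, ← Pi.sub_def, ← Pi.sub_def, eLpNorm_sub_comm]

theorem rho_triangle (hp : 1 ≤ p) (hf : Continuous f) (hg : Continuous g) (hh : Continuous h) :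
    rho a b p f g ≤ rho a b p f h + rho a b p h g := by
  refine ENNReal.toReal_le_add ?_ (eLpNorm_restrict_Icc_ne_top (hf.sub hh))
    (eLpNorm_restrict_Icc_ne_top (hh.sub hg))
  refine (eLpNorm_add_le (hf.sub hh).aestronglyMeasurable (hh.sub hg).aestronglyMeasurable
    hp).trans_eq' ?_
  congr 1
  ext x
  simp

theorem rho_le_of_forall_abs_sub_le {M : ℝ} (hM : 0 ≤ M)
    (hfg : ∀ x ∈ Icc a b, |f x - g x| ≤ M) :
    rho a b p f g ≤ (ENNReal.ofReal (b - a) ^ p.toReal⁻¹).toReal * M := by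
  have hle := eLpNorm_le_of_ae_bound (p := p) (f := fun x => f x - g x)
    (μ := volume.restrict (Icc a b))
    (ae_restrict_of_forall_mem measurableSet_Icc fun x hx => by simpa using hfg x hx)
  rw [Measure.restrict_apply_univ, Real.volume_Icc] at hle
  calc rho a b p f g ≤ (ENNReal.ofReal (b - a) ^ p.toReal⁻¹ * ENNReal.ofReal M).toReal :=
        ENNReal.toReal_mono (by finiteness) hle
    _ = _ := by rw [ENNReal.toReal_mul, ENNReal.toReal_ofReal hM]

theorem rho_pos_of_not_eqOn (hab : a < b) (hp : p ≠ 0) (hf : Continuous f) (hg : Continuous g)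
    (hfg : ¬EqOn f g (Icc a b)) : 0 < rho a b p f g := by
  refine ENNReal.toReal_pos (fun h0 => hfg ?_) (eLpNorm_restrict_Icc_ne_top (hf.sub hg))
  have hae := (eLpNorm_eq_zero_iff (hf.sub hg).aestronglyMeasurable hp).1 h0
  exact Measure.eqOn_Icc_of_ae_eq _ hab.ne (hae.mono fun x hx => sub_eq_zero.1 hx)
    hf.continuousOn hg.continuousOn

end Rho

theorem ofScalars_div_factorial_radius_eq_top {c : ℕ → ℝ} {C : ℝ} (hc : ∀ n, |c n| ≤ C) :
    (FormalMultilinearSeries.ofScalars ℝ fun n => c n / n.factorial).radius = ⊤ := by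
  refine FormalMultilinearSeries.radius_eq_top_of_summable_norm _ fun r => ?_
  refine .of_nonneg_of_le (fun n => by positivity) (fun n => ?_)
    ((Real.summable_pow_div_factorial r).mul_left C)
  rw [FormalMultilinearSeries.ofScalars_norm, Real.norm_eq_abs, abs_div, Nat.abs_cast,
    mul_div_assoc', div_mul_eq_mul_div]
  gcongr
  exact hc n

def boolCoeff (σ : ℕ → Bool) (n : ℕ) : ℝ := if σ n then 1 else 0

theorem isBinary_boolCoeff (σ : ℕ → Bool) : IsBinary (boolCoeff σ) := fun n => by
  unfold boolCoeff; split_ifs <;> simp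

theorem abs_boolCoeff_sub_le (σ τ : ℕ → Bool) (n : ℕ) : |boolCoeff σ n - boolCoeff τ n| ≤ 1 := by
  unfold boolCoeff; split_ifs <;> norm_num

theorem boolCoeff_injective : Function.Injective boolCoeff := fun σ τ h => by
  funext n
  have := congrFun h n
  unfold boolCoeff at this
  split_ifs at this <;> simp_all

theorem exists_boolCoeff_eq {c : ℕ → ℝ} (hc : IsBinary c) : ∃ σ, boolCoeff σ = c :=
  ⟨fun n => decide (c n = 1), funext fun n => by rcases hc n with h | h <;> simp [boolCoeff, h]⟩

noncomputable def binarySeries (σ : ℕ → Bool) : FormalMultilinearSeries ℝ ℝ ℝ :=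
  .ofScalars ℝ fun n => boolCoeff σ n / n.factorial

theorem binarySeries_radius (σ : ℕ → Bool) : (binarySeries σ).radius = ⊤ :=
  ofScalars_div_factorial_radius_eq_top (C := 1) fun n => by
    unfold boolCoeff; split_ifs <;> norm_num

noncomputable def binaryFun (σ : ℕ → Bool) : ℝ → ℝ := (binarySeries σ).sum

theorem hasFPowerSeriesOnBall_binaryFun (σ : ℕ → Bool) :
    HasFPowerSeriesOnBall (binaryFun σ) (binarySeries σ) 0 ⊤ :=
  binarySeries_radius σ ▸ (binarySeries σ).hasFPowerSeriesOnBall (by simp [binarySeries_radius])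

theorem hasSum_binaryFun (σ : ℕ → Bool) (x : ℝ) :
    HasSum (fun n => boolCoeff σ n / n.factorial * x ^ n) (binaryFun σ x) := by
  have hsum := (binarySeries σ).hasSum (x := x) (by simp [binarySeries_radius])
  simp only [binarySeries, FormalMultilinearSeries.ofScalars_apply_eq, smul_eq_mul] at hsum
  exact hsum

theorem analyticOnNhd_binaryFun (σ : ℕ → Bool) : AnalyticOnNhd ℝ (binaryFun σ) univ :=
  fun _ _ => (hasFPowerSeriesOnBall_binaryFun σ).analyticAt_of_mem (by simp)

theorem binaryFun_mem_Esp (σ : ℕ → Bool) : binaryFun σ ∈ Esp :=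
  ⟨(analyticOnNhd_binaryFun σ).contDiff, boolCoeff σ, isBinary_boolCoeff σ, hasSum_binaryFun σ⟩

theorem binaryFun_injective : Function.Injective binaryFun := fun σ τ h => by
  have hseries := (hasFPowerSeriesOnBall_binaryFun σ).hasFPowerSeriesAt.eq_formalMultilinearSeries
    (h ▸ (hasFPowerSeriesOnBall_binaryFun τ).hasFPowerSeriesAt)
  refine boolCoeff_injective (funext fun n => ?_)
  have := congrFun (FormalMultilinearSeries.ofScalars_series_injective ℝ ℝ hseries) n
  exact (div_left_inj' (by positivity)).1 this

theorem exists_binaryFun_eq {f : ℝ → ℝ} (hf : f ∈ Esp) : ∃ σ, binaryFun σ = f := by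
  obtain ⟨-, c, hc, hsum⟩ := hf
  obtain ⟨σ, rfl⟩ := exists_boolCoeff_eq hc
  exact ⟨σ, funext fun x => (hasSum_binaryFun σ x).unique (hsum x)⟩

noncomputable def binaryFunEquiv : (ℕ → Bool) ≃ Esp :=
  .ofBijective (fun σ => ⟨binaryFun σ, binaryFun_mem_Esp σ⟩)
    ⟨fun _ _ h => binaryFun_injective (congrArg Subtype.val h),
      fun f => (exists_binaryFun_eq f.2).imp fun _ h => Subtype.ext h⟩

theorem Esp.eq_of_eqOn_Icc {a b : ℝ} (hab : a < b) {f g : ℝ → ℝ} (hf : f ∈ Esp) (hg : g ∈ Esp)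
    (hfg : EqOn f g (Icc a b)) : f = g := by
  obtain ⟨σ, rfl⟩ := exists_binaryFun_eq hf
  obtain ⟨τ, rfl⟩ := exists_binaryFun_eq hg
  have hmid : Icc a b ∈ 𝓝 ((a + b) / 2) := Icc_mem_nhds (by linarith) (by linarith)
  exact funext fun x => (analyticOnNhd_binaryFun σ).eqOn_of_preconnected_of_eventuallyEq
    (analyticOnNhd_binaryFun τ) isPreconnected_univ (mem_univ _)
    (Filter.mem_of_superset hmid hfg) (mem_univ x)

noncomputable def expTail (γ : ℝ) (N : ℕ) : ℝ := ∑' n, γ ^ (n + N) / (n + N).factorial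

theorem tendsto_expTail (γ : ℝ) : Tendsto (expTail γ) atTop (𝓝 0) :=
  tendsto_sum_nat_add fun n => γ ^ n / n.factorial

theorem expTail_nonneg {γ : ℝ} (hγ : 0 ≤ γ) (N : ℕ) : 0 ≤ expTail γ N :=
  tsum_nonneg fun _ => by positivity

theorem abs_binaryFun_sub_le {γ x : ℝ} (hx : |x| ≤ γ) {σ τ : ℕ → Bool} {N : ℕ}
    (hστ : ∀ n < N, σ n = τ n) : |binaryFun σ x - binaryFun τ x| ≤ expTail γ N := by
  have hsum := (hasSum_nat_add_iff' N).2 ((hasSum_binaryFun σ x).sub (hasSum_binaryFun τ x))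
  rw [Finset.sum_eq_zero fun n hn => by simp [boolCoeff, hστ n (Finset.mem_range.1 hn)],
    sub_zero] at hsum
  refine hsum.norm_le_of_bounded
    ((summable_nat_add_iff N).2 (Real.summable_pow_div_factorial γ)).hasSum fun n => ?_
  rw [← sub_mul, ← sub_div, Real.norm_eq_abs, abs_mul, abs_div, abs_pow, Nat.abs_cast,
    div_mul_eq_mul_div]
  gcongr
  calc |boolCoeff σ (n + N) - boolCoeff τ (n + N)| * |x| ^ (n + N)
      ≤ 1 * γ ^ (n + N) := by
        gcongr
        exact abs_boolCoeff_sub_le σ τ _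
    _ = γ ^ (n + N) := one_mul _

theorem rho_binaryFun_le {γ : ℝ} (hγ : 0 ≤ γ) (p : ℝ≥0∞) {σ τ : ℕ → Bool} {N : ℕ}
    (hστ : ∀ n < N, σ n = τ n) :
    rho 0 γ p (binaryFun σ) (binaryFun τ) ≤
      (ENNReal.ofReal γ ^ p.toReal⁻¹).toReal * expTail γ N := by
  simpa only [sub_zero] using rho_le_of_forall_abs_sub_le (a := 0) (p := p)
    (expTail_nonneg hγ N) fun _ hx =>
    abs_binaryFun_sub_le (abs_le.2 ⟨by linarith [hx.1], hx.2⟩) hστ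

theorem tendsto_rho_binaryFun {γ : ℝ} (hγ : 0 ≤ γ) (p : ℝ≥0∞) (σ : ℕ → Bool) :
    Tendsto (fun τ => rho 0 γ p (binaryFun σ) (binaryFun τ)) (𝓝 σ) (𝓝 0) := by
  set C := (ENNReal.ofReal γ ^ p.toReal⁻¹).toReal
  have hC : Tendsto (fun N => C * expTail γ N) atTop (𝓝 0) := by
    simpa using (tendsto_expTail γ).const_mul C
  refine tendsto_order.2 ⟨fun ε hε => .of_forall fun τ => hε.trans_le ENNReal.toReal_nonneg,
    fun ε hε => ?_⟩
  obtain ⟨N, hN⟩ := (hC.eventually (gt_mem_nhds hε)).exists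
  have hagree : ∀ᶠ τ in 𝓝 σ, ∀ n < N, σ n = τ n :=
    (eventually_all_finite (finite_Iio N)).2 fun n _ =>
      (continuous_apply n).continuousAt.eventually_mem ((isOpen_discrete {σ n}).mem_nhds rfl)
        |>.mono fun _ h => (mem_singleton_iff.1 h).symm
  filter_upwards [hagree] with τ hτ using (rho_binaryFun_le hγ p hτ).trans_lt hN

theorem continuous_Etop_of_tendsto_rho {X : Type*} [TopologicalSpace X] {γ : ℝ} {p : ℝ≥0∞}
    (hp : 1 ≤ p) {φ : X → Esp} (hφ : ∀ x, Tendsto (fun y => rho 0 γ p (φ x) (φ y)) (𝓝 x) (𝓝 0)) :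
    @Continuous X Esp _ (Etop γ p) φ := by
  rw [Etop, continuous_generateFrom_iff]
  rintro _ ⟨f, ε, -, rfl⟩
  refine isOpen_iff_mem_nhds.2 fun x hx => ?_
  filter_upwards [(hφ x).eventually (gt_mem_nhds (sub_pos.2 hx))] with y hy
  have := rho_triangle (a := 0) (b := γ) hp f.2.1.continuous (φ y).2.1.continuous
    (φ x).2.1.continuous
  show rho 0 γ p f (φ y) < ε
  linarith

theorem t2Space_Etop {γ : ℝ} (hγ : 0 < γ) {p : ℝ≥0∞} (hp : 1 ≤ p) : @T2Space Esp (Etop γ p) := by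
  let := Etop γ p
  refine ⟨fun f g hfg => ?_⟩
  have hd : 0 < rho 0 γ p f g := rho_pos_of_not_eqOn hγ (zero_lt_one.trans_le hp).ne'
    f.2.1.continuous g.2.1.continuous fun heq => hfg (Subtype.ext (Esp.eq_of_eqOn_Icc hγ f.2 g.2 heq))
  have isOpen_ball (c : Esp) : IsOpen {k : Esp | rho 0 γ p c k < rho 0 γ p f g / 2} :=
    TopologicalSpace.isOpen_generateFrom_of_mem ⟨c, _, half_pos hd, rfl⟩
  refine ⟨_, _, isOpen_ball f, isOpen_ball g, by simpa [rho_self], by simpa [rho_self],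
    disjoint_left.2 fun k hfk hgk => ?_⟩
  have := rho_triangle (a := 0) (b := γ) hp f.2.1.continuous g.2.1.continuous k.2.1.continuous
  rw [rho_comm k.1] at this
  simp only [mem_ofPred_eq] at hfk hgk
  linarith

theorem not_isOpen_singleton_cantor (σ : ℕ → Bool) : ¬IsOpen {σ} := fun h => by
  have hflip : Tendsto (fun m => Function.update σ m (!σ m)) atTop (𝓝 σ) :=
    tendsto_pi_nhds.2 fun k => tendsto_const_nhds.congr' <|
      (eventually_gt_atTop k).mono fun m hm => (Function.update_of_ne hm.ne _ _).symm
  obtain ⟨m, hm⟩ := (hflip.eventually_mem (h.mem_nhds rfl)).exists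
  simpa using congrFun (mem_singleton_iff.1 hm) m

/-- Fix `γ > 0` and `1 ≤ p ≤ ∞`. The metric space `(E, ρ_p)` is a
Cantor set: it is nonempty, compact, metrizable, totally disconnected, and has no
isolated points (no singleton is open). -/
theorem stmt2 (γ : ℝ) (hγ : 0 < γ) (p : ℝ≥0∞) (hp : 1 ≤ p) :
    Esp.Nonempty ∧
    @CompactSpace ↥Esp (Etop γ p) ∧
    @TopologicalSpace.MetrizableSpace ↥Esp (Etop γ p) ∧
    @TotallyDisconnectedSpace ↥Esp (Etop γ p) ∧
    (∀ x : ↥Esp, ¬ @IsOpen ↥Esp (Etop γ p) {x}) := by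
  let := Etop γ p
  have : T2Space Esp := t2Space_Etop hγ hp
  let e : (ℕ → Bool) ≃ₜ Esp := Continuous.homeoOfEquivCompactToT2 (f := binaryFunEquiv)
    (continuous_Etop_of_tendsto_rho hp (tendsto_rho_binaryFun hγ.le p))
  refine ⟨⟨_, binaryFun_mem_Esp fun _ => false⟩, e.compactSpace, e.symm.isEmbedding.metrizableSpace,
    e.totallyDisconnectedSpace, fun f hf => not_isOpen_singleton_cantor (e.symm f) ?_⟩
  rwa [← e.isOpen_image, image_singleton, e.apply_symm_apply]
end

section
/- Fix γ > 0, 1 ≤ p ≤ ∞, and a finite set F ⊂ ℝ with 2 ≤ #F < ∞. Then the differential operator d/dx is chaotic in the sense of Devaney on the metric space (E_F, ρ_p): the set of periodic points of d/dx in E_F is dense in (E_F, ρ_p), and d/dx is topologically transitive on (E_F, ρ_p). -/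
open MeasureTheory Set Filter
open scoped ENNReal Topology

/-- The set `E_F` of smooth functions of the form `Σ aₙ/n! xⁿ` with all
coefficients `aₙ` in the finite set `F`. -/
def EFsp (F : Finset ℝ) : Set (ℝ → ℝ) :=
  {f | ContDiff ℝ (⊤ : ℕ∞) f ∧ ∃ a : ℕ → ℝ, (∀ n, a n ∈ F) ∧
    ∀ x : ℝ, HasSum (fun n : ℕ => a n / (Nat.factorial n : ℝ) * x ^ n) (f x)}

/-!
Write `f ∈ E_F` as `egf a = Σ aₙ xⁿ/n!` with `a ∈ F^ℕ`; then `d/dx` is the left shift of the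
coefficient sequence. Since `F` is bounded, the tail `Σ_{n ≥ N} C γⁿ/n!` controls `egf a - egf b`
uniformly on `[0, γ]` whenever `a` and `b` agree below `N`, and the `L^p` distance on `[0, γ]` is
dominated by that uniform bound. So repeating the first `N` coefficients of `f` periodically gives
a nearby periodic point, and following the first `N` coefficients of `f` by all those of `g` gives
an `h` near `f` with `(d/dx)^N h = g`.
-/

open Nat

noncomputable def egf (a : ℕ → ℝ) (x : ℝ) : ℝ := ∑' n, a n / n ! * x ^ n

lemma norm_egf_term_le {a C x r : ℝ} {n : ℕ} (ha : |a| ≤ C) (hx : |x| ≤ r) :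
    ‖a / n ! * x ^ n‖ ≤ C * (r ^ n / n !) := by
  rw [norm_mul, norm_div, norm_pow, Real.norm_natCast, Real.norm_eq_abs, Real.norm_eq_abs,
    div_mul_eq_mul_div, mul_div_assoc]
  gcongr
  exact (abs_nonneg a).trans ha

lemma summable_egf_term {a : ℕ → ℝ} {C : ℝ} (ha : ∀ n, |a n| ≤ C) (x : ℝ) :
    Summable fun n => a n / n ! * x ^ n :=
  .of_norm_bounded ((Real.summable_pow_div_factorial |x|).mul_left C)
    fun n => norm_egf_term_le (ha n) le_rfl

lemma hasDerivAt_egf {a : ℕ → ℝ} {C : ℝ} (ha : ∀ n, |a n| ≤ C) (x : ℝ) :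
    HasDerivAt (egf a) (egf (fun n => a (n + 1)) x) x := by
  -- splitting off the constant term makes the termwise derivatives the terms of the shifted series
  have hsplit : egf a = fun y => a 0 + ∑' n, a (n + 1) / (n + 1)! * y ^ (n + 1) :=
    funext fun y => by simp [egf, (summable_egf_term ha y).tsum_eq_zero_add]
  have hterm : ∀ n y, HasDerivAt (fun y => a (n + 1) / (n + 1)! * y ^ (n + 1))
      (a (n + 1) / n ! * y ^ n) y := fun n y => by
    refine ((hasDerivAt_pow (n + 1) y).const_mul _).congr_deriv ?_
    rw [Nat.factorial_succ, Nat.add_sub_cancel]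
    push_cast
    field_simp
  have hx : x ∈ Metric.ball (0 : ℝ) (|x| + 1) := by simp
  rw [hsplit]
  refine (hasDerivAt_tsum_of_isPreconnected
    ((Real.summable_pow_div_factorial (|x| + 1)).mul_left C) Metric.isOpen_ball
    (convex_ball _ _).isPreconnected (fun n y _ => hterm n y)
    (fun n y hy => norm_egf_term_le (ha (n + 1)) (by simpa using (mem_ball_zero_iff.1 hy).le)) hx
    ?_ hx).const_add (a 0)
  exact (summable_nat_add_iff 1).2 (summable_egf_term ha x)

lemma deriv_egf {a : ℕ → ℝ} {C : ℝ} (ha : ∀ n, |a n| ≤ C) :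
    deriv (egf a) = egf fun n => a (n + 1) :=
  funext fun x => (hasDerivAt_egf ha x).deriv

lemma iterate_deriv_egf {a : ℕ → ℝ} {C : ℝ} (ha : ∀ n, |a n| ≤ C) (m : ℕ) :
    deriv^[m] (egf a) = egf fun n => a (n + m) := by
  induction m with
  | zero => rfl
  | succ m ih =>
    rw [Function.iterate_succ_apply', ih, deriv_egf fun n => ha (n + m)]
    simp only [add_right_comm _ 1 m, add_assoc]

lemma contDiff_egf {a : ℕ → ℝ} {C : ℝ} (ha : ∀ n, |a n| ≤ C) :
    ContDiff ℝ (⊤ : ℕ∞) (egf a) :=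
  contDiff_of_differentiable_iteratedDeriv fun m _ => by
    rw [iteratedDeriv_eq_iterate, iterate_deriv_egf ha m]
    exact fun x => (hasDerivAt_egf (fun n => ha (n + m)) x).differentiableAt

lemma egf_sub {a b : ℕ → ℝ} {C D : ℝ} (ha : ∀ n, |a n| ≤ C) (hb : ∀ n, |b n| ≤ D) (x : ℝ) :
    egf a x - egf b x = egf (a - b) x := by
  rw [egf, egf, egf, ← (summable_egf_term ha x).tsum_sub (summable_egf_term hb x)]
  simp only [Pi.sub_apply, sub_div, sub_mul]

lemma abs_egf_le {a : ℕ → ℝ} {C r x : ℝ} {N : ℕ} (ha : ∀ n, |a n| ≤ C)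
    (hN : ∀ n < N, a n = 0) (hx : |x| ≤ r) :
    |egf a x| ≤ C * ∑' k, r ^ (k + N) / (k + N)! := by
  rw [egf, ← (summable_egf_term ha x).sum_add_tsum_nat_add N,
    Finset.sum_eq_zero fun n hn => by simp [hN n (Finset.mem_range.1 hn)], zero_add,
    ← Real.norm_eq_abs]
  exact tsum_of_norm_bounded
    (((summable_nat_add_iff N).2 (Real.summable_pow_div_factorial r)).hasSum.mul_left C)
    fun k => norm_egf_term_le (ha _) hx

lemma rho_le_of_forall_abs_sub_le_s3 {u v δ : ℝ} (p : ℝ≥0∞) {f g : ℝ → ℝ} (hδ : 0 ≤ δ)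
    (h : ∀ x ∈ Icc u v, |f x - g x| ≤ δ) :
    rho u v p f g ≤ (volume (Icc u v) ^ p.toReal⁻¹).toReal * δ := by
  have hae : ∀ᵐ x ∂volume.restrict (Icc u v), ‖f x - g x‖ ≤ δ :=
    (ae_restrict_iff' measurableSet_Icc).2 (ae_of_all _ h)
  have hK : volume (Icc u v) ^ p.toReal⁻¹ ≠ ⊤ :=
    ENNReal.rpow_ne_top_of_nonneg (by positivity) measure_Icc_lt_top.ne
  have := eLpNorm_le_of_ae_bound (p := p) hae
  rw [Measure.restrict_apply_univ] at this
  rw [← ENNReal.toReal_ofReal hδ, ← ENNReal.toReal_mul]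
  exact ENNReal.toReal_mono (ENNReal.mul_ne_top hK ENNReal.ofReal_ne_top) this

lemma eventually_rho_egf_lt {a : ℕ → ℝ} {C : ℝ} (ha : ∀ n, |a n| ≤ C) (γ : ℝ) (p : ℝ≥0∞)
    {ε : ℝ} (hε : 0 < ε) :
    ∀ᶠ N in atTop, ∀ b : ℕ → ℝ, (∀ n, |b n| ≤ C) → (∀ n < N, b n = a n) →
      rho 0 γ p (egf a) (egf b) < ε := by
  have hC : 0 ≤ C := (abs_nonneg _).trans (ha 0)
  set K := (volume (Icc 0 γ) ^ p.toReal⁻¹).toReal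
  have htail : Tendsto (fun N => K * ((C + C) * ∑' k, |γ| ^ (k + N) / (k + N)!)) atTop (𝓝 0) := by
    simpa using ((tendsto_sum_nat_add fun n => |γ| ^ n / n !).const_mul (C + C)).const_mul K
  filter_upwards [htail.eventually (gt_mem_nhds hε)] with N hN b hb hab
  refine (rho_le_of_forall_abs_sub_le_s3 p (by positivity) fun x hx => ?_).trans_lt hN
  rw [egf_sub ha hb]
  refine abs_egf_le (fun n => (abs_sub _ _).trans (add_le_add (ha n) (hb n)))
    (fun n hn => sub_eq_zero.2 (hab n hn).symm) ?_
  rw [abs_of_nonneg hx.1]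
  exact hx.2.trans (le_abs_self γ)

lemma Finset.exists_forall_abs_le (F : Finset ℝ) : ∃ C, ∀ y ∈ F, |y| ≤ C :=
  ⟨∑ y ∈ F, |y|, fun _ hy => Finset.single_le_sum (fun y _ => abs_nonneg y) hy⟩

lemma egf_mem_EFsp {F : Finset ℝ} {a : ℕ → ℝ} (haF : ∀ n, a n ∈ F) : egf a ∈ EFsp F := by
  obtain ⟨C, hC⟩ := F.exists_forall_abs_le
  have ha : ∀ n, |a n| ≤ C := fun n => hC _ (haF n)
  exact ⟨contDiff_egf ha, a, haF, fun x => (summable_egf_term ha x).hasSum⟩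

lemma exists_eq_egf_of_mem_EFsp {F : Finset ℝ} {f : ℝ → ℝ} (hf : f ∈ EFsp F) :
    ∃ a : ℕ → ℝ, (∀ n, a n ∈ F) ∧ f = egf a := by
  obtain ⟨-, a, haF, hsum⟩ := hf
  exact ⟨a, haF, funext fun x => (hsum x).tsum_eq.symm⟩

theorem stmt3_general (γ : ℝ) (p : ℝ≥0∞) (F : Finset ℝ) :
    (∀ f ∈ EFsp F, deriv f ∈ EFsp F) ∧
    (∀ f ∈ EFsp F, ∀ ε > (0 : ℝ), ∃ g ∈ EFsp F,
      (∃ m : ℕ, 1 ≤ m ∧ Set.EqOn (deriv^[m] g) g (Icc 0 γ)) ∧ rho 0 γ p f g < ε) ∧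
    (∀ f ∈ EFsp F, ∀ g ∈ EFsp F, ∀ ε > (0 : ℝ), ∃ h ∈ EFsp F, ∃ n : ℕ,
      rho 0 γ p f h < ε ∧ rho 0 γ p (deriv^[n] h) g < ε) := by
  obtain ⟨C, hC⟩ := F.exists_forall_abs_le
  have bound : ∀ {a : ℕ → ℝ}, (∀ n, a n ∈ F) → ∀ n, |a n| ≤ C := fun haF n => hC _ (haF n)
  refine ⟨?_, ?_, ?_⟩
  · intro f hf
    obtain ⟨a, haF, rfl⟩ := exists_eq_egf_of_mem_EFsp hf
    rw [deriv_egf (bound haF)]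
    exact egf_mem_EFsp fun n => haF (n + 1)
  · intro f hf ε hε
    obtain ⟨a, haF, rfl⟩ := exists_eq_egf_of_mem_EFsp hf
    obtain ⟨N, hN, hN1⟩ :=
      ((eventually_rho_egf_lt (bound haF) γ p hε).and (eventually_ge_atTop 1)).exists
    have hperF : ∀ n, a (n % N) ∈ F := fun n => haF _
    refine ⟨egf fun n => a (n % N), egf_mem_EFsp hperF, ⟨N, hN1, ?_⟩,
      hN _ (bound hperF) fun n hn => by rw [Nat.mod_eq_of_lt hn]⟩
    simp [iterate_deriv_egf (bound hperF), EqOn]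
  · intro f hf g hg ε hε
    obtain ⟨a, haF, rfl⟩ := exists_eq_egf_of_mem_EFsp hf
    obtain ⟨b, hbF, rfl⟩ := exists_eq_egf_of_mem_EFsp hg
    obtain ⟨N, hN⟩ := (eventually_rho_egf_lt (bound haF) γ p hε).exists
    set c : ℕ → ℝ := fun n => if n < N then a n else b (n - N)
    have hcF : ∀ n, c n ∈ F := fun n => by
      by_cases hn : n < N
      · simpa [c, hn] using haF n
      · simpa [c, hn] using hbF (n - N)
    refine ⟨egf c, egf_mem_EFsp hcF, N, hN c (bound hcF) fun n hn => if_pos hn, ?_⟩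
    simpa [iterate_deriv_egf (bound hcF), c, rho] using hε

/-- Fix `γ > 0`, `1 ≤ p ≤ ∞` and a finite set `F ⊂ ℝ` with `#F ≥ 2`.
The set `E_F` is invariant under `d/dx`, and `d/dx` is Devaney chaotic on `(E_F, ρ_p)`:
its periodic points are dense in `(E_F, ρ_p)`, and it is topologically transitive on
`(E_F, ρ_p)` (expressed in the equivalent ε-form for metric spaces). -/
theorem stmt3 (γ : ℝ) (hγ : 0 < γ) (p : ℝ≥0∞) (hp : 1 ≤ p)
    (F : Finset ℝ) (hF : 2 ≤ F.card) :
    (∀ f ∈ EFsp F, deriv f ∈ EFsp F) ∧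
    (∀ f ∈ EFsp F, ∀ ε > (0 : ℝ), ∃ g ∈ EFsp F,
      (∃ m : ℕ, 1 ≤ m ∧ Set.EqOn (deriv^[m] g) g (Icc 0 γ)) ∧ rho 0 γ p f g < ε) ∧
    (∀ f ∈ EFsp F, ∀ g ∈ EFsp F, ∀ ε > (0 : ℝ), ∃ h ∈ EFsp F, ∃ n : ℕ,
      rho 0 γ p f h < ε ∧ rho 0 γ p (deriv^[n] h) g < ε) :=
  stmt3_general γ p F
end

section
/- Let a < b be real numbers and 1 ≤ p ≤ ∞. For every β > 0, every f ∈ C^∞([a,b]) and every ε > 0, there exist g ∈ C^∞([a,b]) with ρ_p(f,g) < ε and n ∈ ℕ such that ρ_p(d^n f/dx^n, d^n g/dx^n) > β. In particular, the system (C^∞([a,b]), d/dx) has sensitive dependence on initial conditions with arbitrarily large sensitivity constant. -/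
/-!
Perturb `f` to `g = f + c e^{2x}`. The difference `g - f` is an eigenfunction of `d/dx` with
eigenvalue `2`, so `ρ_p(dⁿf/dxⁿ, dⁿg/dxⁿ) = 2ⁿ ρ_p(f, g)`. Choosing `c` with
`ρ_p(f, g) = ε / 2`, the distance of the `n`-th derivatives eventually exceeds any `β`.
-/

open MeasureTheory Set Filter
open scoped ENNReal Topology

open Real

lemma iterate_deriv_add_const_mul_exp {n : ℕ} {f : ℝ → ℝ} (hf : ContDiff ℝ n f) (c k : ℝ) :
    deriv^[n] (fun x => f x + c * exp (k * x)) =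
      fun x => deriv^[n] f x + c * k ^ n * exp (k * x) := by
  have hexp : ContDiff ℝ n fun x => exp (k * x) := by fun_prop
  ext x
  rw [← iteratedDeriv_eq_iterate, ← iteratedDeriv_eq_iterate,
    iteratedDeriv_fun_add hf.contDiffAt (contDiffAt_const.mul hexp.contDiffAt),
    iteratedDeriv_const_mul c hexp.contDiffAt, iteratedDeriv_exp_const_mul, mul_assoc]

section
variable {a b : ℝ} {p : ℝ≥0∞}

lemma rho_add_const_mul_right (u h : ℝ → ℝ) (c : ℝ) :
    rho a b p u (fun x => u x + c * h x) = |c| * rho a b p 0 h := by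
  have hdiff : (fun x => u x - (u x + c * h x)) = c • fun x => (0 : ℝ → ℝ) x - h x := by
    ext x
    simp only [Pi.smul_apply, Pi.zero_apply, smul_eq_mul]
    ring
  rw [rho, rho, hdiff, eLpNorm_const_smul, ENNReal.toReal_mul, toReal_enorm, norm_eq_abs]

lemma rho_zero_pos_of_continuous (hab : a < b) (hp : p ≠ 0) {h : ℝ → ℝ} (hh : Continuous h)
    (h_ne : ∀ x, h x ≠ 0) : 0 < rho a b p 0 h := by
  set μ := volume.restrict (Icc a b)
  have hmeas : AEStronglyMeasurable (fun x => (0 : ℝ → ℝ) x - h x) μ := by fun_prop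
  obtain ⟨C, hC⟩ :=
    isCompact_Icc.exists_bound_of_continuousOn (hh.neg.continuousOn (s := Icc a b))
  have hmem : MemLp (fun x => (0 : ℝ → ℝ) x - h x) p μ :=
    MemLp.of_bound hmeas C <| (ae_restrict_iff' measurableSet_Icc).2 <|
      ae_of_all _ fun x hx => by simpa using hC x hx
  refine ENNReal.toReal_pos ?_ hmem.eLpNorm_ne_top
  rw [Ne, eLpNorm_eq_zero_iff hmeas hp, EventuallyEq, ae_iff]
  simpa [μ, h_ne] using hab

end

/-- Let `a < b` and `1 ≤ p ≤ ∞`. For every `β > 0`, every smooth `f` on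
`[a, b]` and every `ε > 0`, there are a smooth `g` with `ρ_p(f, g) < ε` and an `n ∈ ℕ`
with `ρ_p(dⁿf/dxⁿ, dⁿg/dxⁿ) > β`: the system `(C^∞([a, b]), d/dx)` has sensitive
dependence on initial conditions with arbitrarily large sensitivity constant. -/
theorem stmt9 (a b : ℝ) (hab : a < b) (p : ℝ≥0∞) (hp : 1 ≤ p) :
    ∀ β > (0 : ℝ), ∀ f : ℝ → ℝ, ContDiff ℝ (⊤ : ℕ∞) f → ∀ ε > (0 : ℝ),
      ∃ g : ℝ → ℝ, ContDiff ℝ (⊤ : ℕ∞) g ∧ ∃ n : ℕ,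
        rho a b p f g < ε ∧ rho a b p (deriv^[n] f) (deriv^[n] g) > β := by
  intro β hβ f hf ε hε
  have hr : 0 < rho a b p 0 fun x => exp (2 * x) :=
    rho_zero_pos_of_continuous hab (zero_lt_one.trans_le hp).ne' (by fun_prop)
      fun x => (exp_pos _).ne'
  generalize hr_def : rho a b p 0 (fun x => exp (2 * x)) = r at hr
  set g := fun x => f x + ε / (2 * r) * exp (2 * x)
  have hdist (n : ℕ) : rho a b p (deriv^[n] f) (deriv^[n] g) = 2 ^ n * (ε / 2) := by
    rw [iterate_deriv_add_const_mul_exp (hf.of_le (by exact_mod_cast le_top)),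
      rho_add_const_mul_right, hr_def, abs_of_pos (by positivity)]
    field_simp
  obtain ⟨n, hn⟩ := pow_unbounded_of_one_lt (β / (ε / 2)) one_lt_two
  refine ⟨g, hf.add (by fun_prop), n, ?_, ?_⟩
  · simpa using (hdist 0).trans_lt (by simpa using half_lt_self hε)
  · rw [hdist n]
    exact (div_lt_iff₀ (by positivity)).1 hn
end

section
/- Fix γ > 0. There exists M_γ ∈ ℕ such that for every integer k ≥ M_γ and all f, g ∈ E with f(x) = Σ_{n=0}^∞ (a_n/n!) x^n and g(x) = Σ_{n=0}^∞ (b_n/n!) x^n (a_n, b_n ∈ {0,1}): if ρ_1(f,g) < ξ_{k+1}, then a_j = b_j for every j = 0, 1, …, k. -/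
open MeasureTheory Set Filter
open scoped ENNReal Topology

/-- `ζ_k = Σ_{i ≥ k} γ^i/i!`. -/
noncomputable def zeta (γ : ℝ) (k : ℕ) : ℝ :=
  ∑' i : ℕ, γ ^ (k + i) / (Nat.factorial (k + i) : ℝ)

/-- `ξ_k = γ^k/k! − Σ_{i ≥ k+1} γ^i/i!`. -/
noncomputable def xi (γ : ℝ) (k : ℕ) : ℝ :=
  γ ^ k / (Nat.factorial k : ℝ) - zeta γ (k + 1)

/-! If `a` and `b` first differ at index `j`, then `f - g = ±xʲ/j! + (tail)` with the tail
bounded by `zeta x (j + 1) = Σ_{i > j} xⁱ/i!`, so `|f - g| ≥ xʲ/j! - zeta x (j + 1)` on `[0, γ]`.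
This lower bound is the derivative of `t ↦ xi t (j + 1)`, which vanishes at `0`; hence
`ρ₁(f, g) ≥ xi t (j + 1)` for every `t ∈ (0, γ]`. For `j ≥ 2γ` the sequence `n ↦ xi γ n` is
decreasing, so `t = γ` gives `ρ₁(f, g) ≥ xi γ (k + 1)`. For the finitely many smaller `j`, a
fixed `t ≤ 1/4` gives `xi t (j + 1) ≥ t^{j+1}/(2 (j+1)!)`, a positive bound independent of `k`,
while `xi γ (k + 1) ≤ γ^{k+1}/(k+1)! → 0`. -/

lemma hasSum_zeta (x : ℝ) (n : ℕ) :
    HasSum (fun i => x ^ (n + i) / (Nat.factorial (n + i) : ℝ))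
      (Real.exp x - ∑ i ∈ Finset.range n, x ^ i / (Nat.factorial i : ℝ)) := by
  have h := (hasSum_nat_add_iff' n).2 (Real.exp_eq_exp_ℝ ▸ NormedSpace.expSeries_div_hasSum_exp x)
  simpa only [add_comm] using h

lemma zeta_eq_exp_sub_sum (x : ℝ) (n : ℕ) :
    zeta x n = Real.exp x - ∑ i ∈ Finset.range n, x ^ i / (Nat.factorial i : ℝ) :=
  (hasSum_zeta x n).tsum_eq

lemma zeta_eq_add_zeta_succ (x : ℝ) (n : ℕ) :
    zeta x n = x ^ n / (Nat.factorial n : ℝ) + zeta x (n + 1) := by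
  rw [zeta_eq_exp_sub_sum, zeta_eq_exp_sub_sum, Finset.sum_range_succ]
  ring

lemma zeta_nonneg {x : ℝ} (hx : 0 ≤ x) (n : ℕ) : 0 ≤ zeta x n :=
  tsum_nonneg fun _ => by positivity

lemma continuous_zeta (n : ℕ) : Continuous fun x => zeta x n := by
  simp only [zeta_eq_exp_sub_sum]
  fun_prop

lemma zeta_zero_succ (n : ℕ) : zeta 0 (n + 1) = 0 := by
  simp [zeta]

lemma hasDerivAt_pow_succ_div_factorial (x : ℝ) (n : ℕ) :
    HasDerivAt (fun y => y ^ (n + 1) / (Nat.factorial (n + 1) : ℝ))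
      (x ^ n / (Nat.factorial n : ℝ)) x := by
  refine ((hasDerivAt_pow (n + 1) x).div_const _).congr_deriv ?_
  push_cast [Nat.factorial_succ]
  field_simp

lemma hasDerivAt_sum_range_succ_pow_div_factorial (x : ℝ) (n : ℕ) :
    HasDerivAt (fun y => ∑ i ∈ Finset.range (n + 1), y ^ i / (Nat.factorial i : ℝ))
      (∑ i ∈ Finset.range n, x ^ i / (Nat.factorial i : ℝ)) x := by
  induction n with
  | zero => simpa using hasDerivAt_const x (1 : ℝ)
  | succ n ih =>
    simpa [Finset.sum_range_succ] using ih.fun_add (hasDerivAt_pow_succ_div_factorial x n)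

lemma hasDerivAt_zeta_succ (x : ℝ) (n : ℕ) :
    HasDerivAt (fun y => zeta y (n + 1)) (zeta x n) x := by
  simp only [zeta_eq_exp_sub_sum]
  exact (Real.hasDerivAt_exp x).sub (hasDerivAt_sum_range_succ_pow_div_factorial x n)

lemma xi_le_pow_div_factorial {x : ℝ} (hx : 0 ≤ x) (n : ℕ) :
    xi x n ≤ x ^ n / (Nat.factorial n : ℝ) :=
  sub_le_self _ (zeta_nonneg hx _)

lemma xi_succ_le_xi {γ : ℝ} (hγ : 0 ≤ γ) {n : ℕ} (h : 2 * γ ≤ n + 1) :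
    xi γ (n + 1) ≤ xi γ n := by
  have hterm : γ ^ (n + 1) / (Nat.factorial (n + 1) : ℝ)
      = γ ^ n / Nat.factorial n * (γ / (n + 1)) := by
    push_cast [Nat.factorial_succ, pow_succ]
    field_simp
  have hratio : 2 * (γ / (n + 1)) ≤ 1 := by
    rw [← mul_div_assoc, div_le_one (by positivity)]
    exact h
  have key : 2 * (γ ^ (n + 1) / (Nat.factorial (n + 1) : ℝ)) ≤ γ ^ n / Nat.factorial n := by
    rw [hterm]
    nlinarith [show 0 ≤ γ ^ n / Nat.factorial n by positivity]
  simp only [xi]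
  rw [zeta_eq_add_zeta_succ γ (n + 1)]
  linarith

lemma xi_le_xi_of_le {γ : ℝ} (hγ : 0 ≤ γ) {m n : ℕ} (hm : 2 * γ ≤ m + 1) (hmn : m ≤ n) :
    xi γ n ≤ xi γ m := by
  refine antitoneOn_nat_Ici_of_succ_le (fun k hk => xi_succ_le_xi hγ ?_)
    (le_refl m : m ∈ {x | m ≤ x}) hmn hmn
  exact hm.trans (by exact_mod_cast Nat.succ_le_succ hk)

lemma half_pow_div_factorial_le_xi {t : ℝ} (ht0 : 0 ≤ t) (ht : t ≤ 1 / 4) (n : ℕ) :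
    t ^ n / (Nat.factorial n : ℝ) / 2 ≤ xi t n := by
  have htail : zeta t (n + 1)
      ≤ t ^ n / Nat.factorial n * (t * (n + 2) / (n + 1) ^ 2) := by
    have h := Real.exp_bound' ht0 (by linarith) n.succ_pos
    rw [zeta_eq_exp_sub_sum]
    convert sub_le_iff_le_add'.2 h using 1
    push_cast [Nat.factorial_succ, pow_succ]
    field_simp
    ring
  have hratio : t * (n + 2) / (n + 1) ^ 2 ≤ 1 / 2 := by
    rw [div_le_iff₀ (by positivity)]
    nlinarith [sq_nonneg (n : ℝ), (n.cast_nonneg : (0 : ℝ) ≤ n)]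
  have hA : 0 ≤ t ^ n / (Nat.factorial n : ℝ) := by positivity
  simp only [xi]
  nlinarith

lemma integral_pow_div_factorial_sub_zeta (t : ℝ) (j : ℕ) :
    ∫ x in (0 : ℝ)..t, (x ^ j / (Nat.factorial j : ℝ) - zeta x (j + 1)) = xi t (j + 1) := by
  have hderiv (x : ℝ) : HasDerivAt (fun y => xi y (j + 1))
      (x ^ j / (Nat.factorial j : ℝ) - zeta x (j + 1)) x :=
    (hasDerivAt_pow_succ_div_factorial x j).sub (hasDerivAt_zeta_succ x (j + 1))
  have hcont : Continuous fun x : ℝ => x ^ j / (Nat.factorial j : ℝ) - zeta x (j + 1) :=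
    ((continuous_pow j).div_const _).sub (continuous_zeta _)
  rw [intervalIntegral.integral_eq_sub_of_hasDerivAt (fun x _ => hderiv x)
    (hcont.intervalIntegrable _ _)]
  simp [xi, zeta_zero_succ]

lemma abs_div_factorial_mul_pow_le_s13 {c : ℝ} (hc : |c| ≤ 1) (x : ℝ) (n : ℕ) :
    |c / (Nat.factorial n : ℝ) * x ^ n| ≤ |x| ^ n / (Nat.factorial n : ℝ) := by
  rw [abs_mul, abs_div, Nat.abs_cast, abs_pow, div_mul_eq_mul_div]
  gcongr
  exact mul_le_of_le_one_left (by positivity) hc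

lemma summable_div_factorial_mul_pow {c : ℕ → ℝ} (hc : ∀ n, |c n| ≤ 1) (x : ℝ) :
    Summable fun n => c n / (Nat.factorial n : ℝ) * x ^ n :=
  .of_norm_bounded (Real.summable_pow_div_factorial |x|)
    fun n => abs_div_factorial_mul_pow_le_s13 (hc n) x n

lemma abs_tsum_nat_add_le_zeta {c : ℕ → ℝ} (hc : ∀ n, |c n| ≤ 1) (x : ℝ) (m : ℕ) :
    |∑' i, c (i + m) / (Nat.factorial (i + m) : ℝ) * x ^ (i + m)| ≤ zeta |x| m := by
  have h := hasSum_zeta |x| m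
  rw [← zeta_eq_exp_sub_sum] at h
  simp only [add_comm m] at h
  rw [← Real.norm_eq_abs]
  exact tsum_of_norm_bounded h fun i => abs_div_factorial_mul_pow_le_s13 (hc (i + m)) x (i + m)

lemma pow_div_factorial_sub_zeta_le_abs_tsum {c : ℕ → ℝ} (hc : ∀ n, |c n| ≤ 1) {j : ℕ}
    (hlow : ∀ n < j, c n = 0) (hj : |c j| = 1) {x : ℝ} (hx : 0 ≤ x) :
    x ^ j / (Nat.factorial j : ℝ) - zeta x (j + 1)
      ≤ |∑' n, c n / (Nat.factorial n : ℝ) * x ^ n| := by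
  have hsplit := (summable_div_factorial_mul_pow hc x).sum_add_tsum_nat_add (j + 1)
  rw [Finset.sum_range_succ, Finset.sum_eq_zero fun n hn => by
    simp [hlow n (Finset.mem_range.1 hn)], zero_add] at hsplit
  have hlead : |c j / (Nat.factorial j : ℝ) * x ^ j| = x ^ j / (Nat.factorial j : ℝ) := by
    rw [abs_mul, abs_div, hj, Nat.abs_cast, abs_pow, abs_of_nonneg hx]
    ring
  have htail := abs_tsum_nat_add_le_zeta hc x (j + 1)
  have hrev := abs_sub_abs_le_abs_sub (c j / (Nat.factorial j : ℝ) * x ^ j)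
    (-∑' i, c (i + (j + 1)) / (Nat.factorial (i + (j + 1)) : ℝ) * x ^ (i + (j + 1)))
  rw [abs_neg, sub_neg_eq_add, hsplit, hlead] at hrev
  rw [abs_of_nonneg hx] at htail
  linarith

lemma eLpNorm_ne_top_of_ae_bound {α F : Type*} [MeasurableSpace α] [NormedAddCommGroup F]
    {μ : Measure α} [IsFiniteMeasure μ] {f : α → F} {C : ℝ} (hfC : ∀ᵐ x ∂μ, ‖f x‖ ≤ C)
    (p : ℝ≥0∞) : eLpNorm f p μ ≠ ∞ :=
  ((eLpNorm_le_of_ae_bound hfC).trans_lt (ENNReal.mul_lt_top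
    (ENNReal.rpow_lt_top_of_nonneg (by positivity) (measure_ne_top μ univ))
    ENNReal.ofReal_lt_top)).ne

lemma setIntegral_le_toReal_eLpNorm_one {α : Type*} [MeasurableSpace α] {μ : Measure α}
    {s u : Set α} {φ h : α → ℝ} (hs : MeasurableSet s) (hsu : s ⊆ u)
    (hφ : IntegrableOn φ s μ) (hφh : ∀ x ∈ s, φ x ≤ |h x|)
    (hfin : eLpNorm h 1 (μ.restrict u) ≠ ∞) :
    ∫ x in s, φ x ∂μ ≤ (eLpNorm h 1 (μ.restrict u)).toReal := by
  have hpos : IntegrableOn (fun x => max (φ x) 0) s μ := hφ.pos_part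
  refine (integral_mono hφ hpos fun x => le_max_left _ _).trans ?_
  rw [← ENNReal.ofReal_le_iff_le_toReal hfin, ofReal_integral_eq_lintegral_ofReal hpos
    (ae_of_all _ fun x => le_max_right _ _), eLpNorm_one_eq_lintegral_enorm]
  calc ∫⁻ x in s, ENNReal.ofReal (max (φ x) 0) ∂μ ≤ ∫⁻ x in s, ‖h x‖ₑ ∂μ := by
        refine lintegral_mono_ae ?_
        filter_upwards [ae_restrict_mem hs] with x hx
        rw [Real.enorm_eq_ofReal_abs]
        exact ENNReal.ofReal_le_ofReal (max_le (hφh x hx) (abs_nonneg _))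
    _ ≤ ∫⁻ x in u, ‖h x‖ₑ ∂μ := lintegral_mono' (Measure.restrict_mono hsu le_rfl) le_rfl

namespace IsBinary

variable {a b : ℕ → ℝ}

lemma abs_le_one_s13 (ha : IsBinary a) (n : ℕ) : |a n| ≤ 1 := by
  rcases ha n with h | h <;> simp [h]

lemma abs_sub_le_one_s13 (ha : IsBinary a) (hb : IsBinary b) (n : ℕ) : |a n - b n| ≤ 1 := by
  rcases ha n with h | h <;> rcases hb n with h' | h' <;> simp [h, h']

lemma abs_sub_eq_one_s13 (ha : IsBinary a) (hb : IsBinary b) {n : ℕ} (hne : a n ≠ b n) :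
    |a n - b n| = 1 := by
  rcases ha n with h | h <;> rcases hb n with h' | h' <;> simp_all

end IsBinary

lemma fseq_sub_fseq {a b : ℕ → ℝ} (ha : ∀ n, |a n| ≤ 1) (hb : ∀ n, |b n| ≤ 1) (x : ℝ) :
    fseq a x - fseq b x = ∑' n, (a n - b n) / (Nat.factorial n : ℝ) * x ^ n := by
  rw [fseq, fseq, ← (summable_div_factorial_mul_pow ha x).tsum_sub
    (summable_div_factorial_mul_pow hb x)]
  simp only [sub_div, sub_mul]

lemma xi_le_rho {γ t : ℝ} (ht : t ∈ Ioc 0 γ) {a b : ℕ → ℝ} (ha : IsBinary a) (hb : IsBinary b)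
    {j : ℕ} (hj : a j ≠ b j) (hlow : ∀ n < j, a n = b n) :
    xi t (j + 1) ≤ rho 0 γ 1 (fseq a) (fseq b) := by
  have hdiff := fseq_sub_fseq ha.abs_le_one_s13 hb.abs_le_one_s13
  have hpointwise (x : ℝ) (hx : 0 ≤ x) :
      x ^ j / (Nat.factorial j : ℝ) - zeta x (j + 1) ≤ |fseq a x - fseq b x| := by
    rw [hdiff]
    exact pow_div_factorial_sub_zeta_le_abs_tsum (ha.abs_sub_le_one_s13 hb)
      (fun n hn => sub_eq_zero.2 (hlow n hn)) (ha.abs_sub_eq_one_s13 hb hj) hx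
  have hbound : ∀ᵐ x ∂volume.restrict (Icc 0 γ), ‖fseq a x - fseq b x‖ ≤ Real.exp γ := by
    filter_upwards [ae_restrict_mem measurableSet_Icc] with x hx
    have h := abs_tsum_nat_add_le_zeta (ha.abs_sub_le_one_s13 hb) x 0
    simp only [add_zero, zeta_eq_exp_sub_sum, Finset.range_zero, Finset.sum_empty, sub_zero,
      abs_of_nonneg hx.1] at h
    rw [Real.norm_eq_abs, hdiff]
    exact h.trans (Real.exp_le_exp.2 hx.2)
  rw [← integral_pow_div_factorial_sub_zeta, intervalIntegral.integral_of_le ht.1.le,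
    ← integral_Icc_eq_integral_Ioc]
  exact setIntegral_le_toReal_eLpNorm_one measurableSet_Icc (Icc_subset_Icc_right ht.2)
    (((continuous_pow j).div_const _).sub (continuous_zeta _)).integrableOn_Icc
    (fun x hx => hpointwise x hx.1) (eLpNorm_ne_top_of_ae_bound hbound 1)

lemma exists_forall_xi_le_xi {γ : ℝ} (hγ : 0 < γ) :
    ∃ M : ℕ, ∀ k ≥ M, ∀ j ≤ k, ∃ t ∈ Ioc 0 γ, xi γ (k + 1) ≤ xi t (j + 1) := by
  set δ := min γ (1 / 4)
  have hδ : δ ∈ Ioc 0 γ := ⟨lt_min hγ (by norm_num), min_le_left _ _⟩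
  have hδ4 : δ ≤ 1 / 4 := min_le_right _ _
  obtain ⟨N, hN⟩ := exists_nat_ge (2 * γ)
  have hc : 0 < δ ^ N / (Nat.factorial N : ℝ) / 2 := by have := hδ.1; positivity
  obtain ⟨M, hM⟩ := eventually_atTop.1
    ((FloorSemiring.tendsto_pow_div_factorial_atTop γ).eventually (gt_mem_nhds hc))
  refine ⟨max N M, fun k hk j hjk => ?_⟩
  rcases le_or_gt N j with hNj | hjN
  · refine ⟨γ, ⟨hγ, le_rfl⟩, xi_le_xi_of_le hγ.le ?_ (by omega)⟩
    have : (N : ℝ) ≤ j := Nat.cast_le.2 hNj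
    push_cast
    linarith
  · refine ⟨δ, hδ, ?_⟩
    calc xi γ (k + 1) ≤ γ ^ (k + 1) / (Nat.factorial (k + 1) : ℝ) :=
          xi_le_pow_div_factorial hγ.le _
      _ ≤ δ ^ N / (Nat.factorial N : ℝ) / 2 := (hM (k + 1) (by omega)).le
      _ ≤ δ ^ (j + 1) / (Nat.factorial (j + 1) : ℝ) / 2 := by
          have hpow := pow_le_pow_of_le_one hδ.1.le (hδ4.trans (by norm_num)) hjN
          have hfac : (Nat.factorial (j + 1) : ℝ) ≤ Nat.factorial N := mod_cast Nat.factorial_le hjN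
          gcongr ?_ / 2
          exact div_le_div₀ (by positivity) hpow (by positivity) hfac
      _ ≤ xi δ (j + 1) := half_pow_div_factorial_le_xi hδ.1.le hδ4 _

/-- Fix `γ > 0`. There is an `M_γ ∈ ℕ` such that for every `k ≥ M_γ`
and all `f = Σ aₙ/n! xⁿ`, `g = Σ bₙ/n! xⁿ` in `E` (binary coefficients): if
`ρ_1(f, g) < ξ_{k+1}`, then `a_j = b_j` for all `j = 0, 1, …, k`. -/
theorem stmt13 (γ : ℝ) (hγ : 0 < γ) :
    ∃ M : ℕ, ∀ k : ℕ, M ≤ k → ∀ a b : ℕ → ℝ, IsBinary a → IsBinary b →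
      rho 0 γ 1 (fseq a) (fseq b) < xi γ (k + 1) →
      ∀ j ≤ k, a j = b j := by
  obtain ⟨M, hM⟩ := exists_forall_xi_le_xi hγ
  refine ⟨M, fun k hk a b ha hb hρ j => ?_⟩
  induction j using Nat.strong_induction_on with
  | _ j ih =>
    intro hjk
    by_contra hj
    obtain ⟨t, ht, hle⟩ := hM k hk j hjk
    exact (hle.trans (xi_le_rho ht ha hb hj fun n hn => ih n hn (by omega))).not_gt hρ
end
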